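/- Let p > 1 with ℝ₊-valued product measurable random fields ₙX : [0,T]² × Ω → ℝ₊. Suppose there are p̄ > p, c_{p̄} > 0 and q ≥ p̄/2 such that E[ max_{j∈{0,…,kₙ}} ∫_r^{t_{j,n}} ₙX_{t_{j,n}, s}^{p̄} ds ] ≤ c_{p̄} |𝕋ₙ|^q for all n. Then, for the delayed linear interpolation ₙW of a d-dimensional Brownian motion along the balanced partitions 𝕋ₙ, there is a constant c_p > 0 such that E[ max_{j∈{0,…,kₙ}} ( ∫_r^{t_{j,n}} ₙX_{t_{j,n}, s} |ₙẆ_s| ds )^p ] ≤ c_p |𝕋ₙ|^{p(q/p̄ − 1/2)} for all n. -/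

import Mathlib

open MeasureTheory ProbabilityTheory Filter Set ENNReal

noncomputable section

abbrev Vec (m : ℕ) := EuclideanSpace ℝ (Fin m)
abbrev Mat (m d : ℕ) := EuclideanSpace ℝ (Fin m × Fin d)

def matVec {m d : ℕ} (A : Mat m d) (v : Vec d) : Vec m :=
  (EuclideanSpace.equiv (Fin m) ℝ).symm fun k => ∑ l, A (k, l) * v l

/-- Path stopped at time `s`. -/
def stopAt {E : Type*} (x : ℝ → E) (s : ℝ) : ℝ → E := fun u => x (min u s)

/-- Sup norm over `[0,T]`. -/
def supNorm {E : Type*} [NormedAddCommGroup E] (T : ℝ) (x : ℝ → E) : ℝ :=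
  ⨆ u : Icc (0:ℝ) T, ‖x u‖

def esupNorm {E : Type*} [NormedAddCommGroup E] (T : ℝ) (x : ℝ → E) : ℝ≥0∞ :=
  ⨆ u : Icc (0:ℝ) T, (‖x u‖₊ : ℝ≥0∞)

/-- The pseudometric `d_∞((t,x),(s,y)) = |t-s|^{1/2} + ‖x^t - y^s‖_∞`. -/
def dInfty {E : Type*} [NormedAddCommGroup E] (T t : ℝ) (x : ℝ → E) (s : ℝ) (y : ℝ → E) : ℝ :=
  |t - s| ^ (1/2 : ℝ) + supNorm T (fun u => stopAt x t u - stopAt y s u)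

/-- Delayed α-Hölder norm on `[0,T]` with Hölder seminorm over `[r,T]`. -/
def holderNorm {E : Type*} [NormedAddCommGroup E] (α r T : ℝ) (x : ℝ → E) : ℝ :=
  supNorm T (stopAt x r) +
    ⨆ p : {q : Icc r T × Icc r T // (q.1 : ℝ) ≠ (q.2 : ℝ)},
      ‖x p.1.1 - x p.1.2‖ / |(p.1.1 : ℝ) - (p.1.2 : ℝ)| ^ α

def eholderNorm {E : Type*} [NormedAddCommGroup E] (α r T : ℝ) (x : ℝ → E) : ℝ≥0∞ :=
  esupNorm T (stopAt x r) +
    ⨆ (s : Icc r T) (t : Icc r T) (_ : (s : ℝ) ≠ (t : ℝ)),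
      (‖x s - x t‖₊ : ℝ≥0∞) / ENNReal.ofReal (|(s : ℝ) - (t : ℝ)| ^ α)

/-- A sequence of partitions of `[r,T]`. -/
structure PartitionSeq (r T : ℝ) where
  k : ℕ → ℕ
  t : ℕ → ℕ → ℝ
  k_pos : ∀ n, 0 < k n
  left : ∀ n, t n 0 = r
  right : ∀ n, t n (k n) = T
  mono : ∀ n, ∀ i < k n, t n i < t n (i + 1)

def PartitionSeq.mesh {r T : ℝ} (P : PartitionSeq r T) (n : ℕ) : ℝ :=
  (Finset.range (P.k n)).sup' (Finset.nonempty_range_iff.mpr (P.k_pos n).ne')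
    (fun i => P.t n (i + 1) - P.t n i)

/-- Balanced sequence of partitions with constant `c`. -/
def PartitionSeq.Balanced {r T : ℝ} (P : PartitionSeq r T) (c : ℝ) : Prop :=
  ∀ n, ∀ i < P.k n, P.mesh n ≤ c * (P.t n (i + 1) - P.t n i)

open Classical in
/-- Greatest index `i ≤ kₙ` with `t_{i,n} < u`. -/
def PartitionSeq.idxLt {r T : ℝ} (P : PartitionSeq r T) (n : ℕ) (u : ℝ) : ℕ :=
  Nat.findGreatest (fun i => P.t n i < u) (P.k n)

open Classical in
/-- Greatest index `i ≤ kₙ - 1` with `t_{i,n} ≤ u`. -/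
def PartitionSeq.idxLe {r T : ℝ} (P : PartitionSeq r T) (n : ℕ) (u : ℝ) : ℕ :=
  Nat.findGreatest (fun i => P.t n i ≤ u) (P.k n - 1)

/-- `uₙ`, the partition point below `u`. -/
def PartitionSeq.below {r T : ℝ} (P : PartitionSeq r T) (n : ℕ) (u : ℝ) : ℝ :=
  P.t n (P.idxLe n u)

/-- `u̲ₙ`, the predecessor of the partition point below `u`. -/
def PartitionSeq.pred {r T : ℝ} (P : PartitionSeq r T) (n : ℕ) (u : ℝ) : ℝ :=
  P.t n (P.idxLe n u - 1)

/-- `γₙ(u) = Δuₙ / Δūₙ`. -/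
def PartitionSeq.gamma {r T : ℝ} (P : PartitionSeq r T) (n : ℕ) (u : ℝ) : ℝ :=
  (P.t n (P.idxLe n u) - P.t n (P.idxLe n u - 1)) /
    (P.t n (P.idxLe n u + 1) - P.t n (P.idxLe n u))

/-- Delayed piecewise-linear interpolation along the `n`-th partition. -/
def PartitionSeq.interp {r T : ℝ} (P : PartitionSeq r T) (n : ℕ) {E : Type*}
    [NormedAddCommGroup E] [NormedSpace ℝ E] (x : ℝ → E) (u : ℝ) : E :=
  if u ≤ P.t n 1 then x (min u r)
  else x (P.t n (P.idxLt n u - 1)) +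
    ((u - P.t n (P.idxLt n u)) / (P.t n (P.idxLt n u + 1) - P.t n (P.idxLt n u))) •
      (x (P.t n (P.idxLt n u)) - x (P.t n (P.idxLt n u - 1)))

/-- Piecewise-constant derivative of the delayed linear interpolation. -/
def PartitionSeq.interpDeriv {r T : ℝ} (P : PartitionSeq r T) (n : ℕ) {E : Type*}
    [NormedAddCommGroup E] [NormedSpace ℝ E] (x : ℝ → E) (u : ℝ) : E :=
  if u ≤ P.t n 1 then 0
  else (P.t n (P.idxLt n u + 1) - P.t n (P.idxLt n u))⁻¹ •
    (x (P.t n (P.idxLt n u)) - x (P.t n (P.idxLt n u - 1)))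

/-- Standard d-dimensional Brownian motion. -/
def IsBrownianMotion {Ω : Type*} [MeasurableSpace Ω] {d : ℕ}
    (μ : Measure Ω) (W : ℝ → Ω → Vec d) : Prop :=
  (∀ ω, Continuous fun u => W u ω) ∧ (∀ᵐ ω ∂μ, W 0 ω = 0) ∧
  (∀ (N : ℕ) (τ : ℕ → ℝ), Monotone τ → (∀ i, 0 ≤ τ i) →
    iIndepFun
      (fun p : Fin N × Fin d => fun ω => W (τ (p.1 + 1)) ω p.2 - W (τ p.1) ω p.2) μ) ∧
  (∀ s u : ℝ, 0 ≤ s → s ≤ u → ∀ l : Fin d,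
    Measure.map (fun ω => W u ω l - W s ω l) μ = gaussianReal 0 (Real.toNNReal (u - s)))

/-- Brownian motion with respect to a filtration. -/
def IsFilteredBM {Ω : Type*} [mΩ : MeasurableSpace Ω] {d : ℕ} (μ : Measure Ω)
    (F : Filtration ℝ mΩ) (W : ℝ → Ω → Vec d) : Prop :=
  IsBrownianMotion μ W ∧ Adapted F W ∧
  ∀ s u : ℝ, 0 ≤ s → s ≤ u →
    Indep (MeasurableSpace.comap (fun ω => W u ω - W s ω) inferInstance) (F s) μ

/-- Riemann sum for a stochastic integral. -/
def riemannSum {Ω : Type*} {m d : ℕ} (W : ℝ → Ω → Vec d) (X : ℝ → Ω → Mat m d)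
    (τ : ℕ → ℝ) (K : ℕ) (ω : Ω) : Vec m :=
  ∑ i ∈ Finset.range K, matVec (X (τ i) ω) (W (τ (i + 1)) ω - W (τ i) ω)

/-- `I` is the Itô integral `∫_a^b X dW`: left-point Riemann sums along any sequence of
partitions of `[a,b]` with vanishing mesh converge to `I` in measure (in probability). -/
def IsItoIntegral {Ω : Type*} [MeasurableSpace Ω] {m d : ℕ} (μ : Measure Ω)
    (W : ℝ → Ω → Vec d) (X : ℝ → Ω → Mat m d) (a b : ℝ) (I : Ω → Vec m) : Prop :=
  ∀ (τ : ℕ → ℕ → ℝ) (K : ℕ → ℕ),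
    (∀ n, 0 < K n ∧ τ n 0 = a ∧ τ n (K n) = b ∧ ∀ i < K n, τ n i < τ n (i + 1)) →
    Tendsto (fun n => ⨆ i : Fin (K n), (τ n (i + 1) - τ n i)) atTop (nhds 0) →
    TendstoInMeasure μ (fun n ω => riemannSum W X (τ n) (K n) ω) atTop I

/-- Vertical perturbation of a path at time `s`. -/
def vertShift {E : Type*} [Add E] (x : ℝ → E) (s : ℝ) (h : E) : ℝ → E :=
  fun u => if s ≤ u then x u + h else x u

/-- Vertical (Dupire) derivative of a non-anticipative functional. -/
def HasVertDerivAt {E F : Type*} [NormedAddCommGroup E] [NormedSpace ℝ E]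
    [NormedAddCommGroup F] [NormedSpace ℝ F]
    (G : ℝ → (ℝ → E) → F) (s : ℝ) (x : ℝ → E) (D : E →L[ℝ] F) : Prop :=
  HasFDerivAt (fun h : E => G s (vertShift x s h)) D 0

/-- Horizontal derivative of a non-anticipative functional. -/
def HasHorizDerivAt {E F : Type*} [NormedAddCommGroup E]
    [NormedAddCommGroup F] [NormedSpace ℝ F]
    (G : ℝ → (ℝ → E) → F) (s : ℝ) (x : ℝ → E) (D : F) : Prop :=
  HasDerivWithinAt (fun u => G u (stopAt x s)) D (Ici s) s

/-- Càdlàg path on `ℝ`. -/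
def Cadlag {E : Type*} [TopologicalSpace E] (x : ℝ → E) : Prop :=
  (∀ u, ContinuousWithinAt x (Ici u) u) ∧ ∀ u, ∃ L, Tendsto x (nhdsWithin u (Iio u)) (nhds L)

/-- `d_∞`-continuity of a functional on `[r,t₀) × D`. -/
def DInftyContinuous {E F : Type*} [NormedAddCommGroup E] [NormedAddCommGroup F]
    (r t₀ T : ℝ) (G : ℝ → (ℝ → E) → F) : Prop :=
  ∀ s ∈ Ico r t₀, ∀ x : ℝ → E, Cadlag x → ∀ ε > 0, ∃ δ > 0,
    ∀ u ∈ Ico r t₀, ∀ y : ℝ → E, Cadlag y → dInfty T u y s x < δ → ‖G u y - G s x‖ < ε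

/-- Bounded on bounded sets. -/
def BddOnBounded {E F : Type*} [NormedAddCommGroup E] [NormedAddCommGroup F]
    (r t₀ T : ℝ) (G : ℝ → (ℝ → E) → F) : Prop :=
  ∀ R > 0, ∃ C, ∀ s ∈ Ico r t₀, ∀ x : ℝ → E, Cadlag x → supNorm T x ≤ R → ‖G s x‖ ≤ C

/-- The correction term `ρ` built from the vertical derivative of `σ`. -/
def corrTerm {m d : ℕ} (σ : ℝ → ℝ → (ℝ → Vec m) → Mat m d)
    (σx : ℝ → ℝ → (ℝ → Vec m) → (Vec m →L[ℝ] Mat m d))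
    (t s : ℝ) (x : ℝ → Vec m) : Vec m :=
  if s < t then
    (EuclideanSpace.equiv (Fin m) ℝ).symm fun k =>
      ∑ l, (σx t s x ((EuclideanSpace.equiv (Fin m) ℝ).symm fun k' => σ s s x (k', l))) (k, l)
  else 0

/-- Delayed Sobolev norm `‖x‖_{1,p,r}` computed from a choice `x'` of weak derivative. -/
def sobNorm {E : Type*} [NormedAddCommGroup E] (p r T : ℝ) (x x' : ℝ → E) : ℝ :=
  supNorm T (stopAt x r) + (∫ s in Icc r T, ‖x' s‖ ^ p) ^ (1/p)

/-- Membership in the delayed Sobolev space `W_r^{1,p}([0,T],E)`, witnessed by the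
weak derivative `x'`. -/
def IsW1p {E : Type*} [NormedAddCommGroup E] [NormedSpace ℝ E] (p r T : ℝ)
    (x x' : ℝ → E) : Prop :=
  ContinuousOn x (Icc 0 T) ∧ IntervalIntegrable x' MeasureTheory.volume r T ∧
  (∀ t ∈ Icc r T, x t = x r + ∫ s in r..t, x' s) ∧
  MeasureTheory.IntegrableOn (fun s => ‖x' s‖ ^ p) (Icc r T) MeasureTheory.volume

/-- Solution of a path-dependent stochastic Volterra integral equation on `[r,T]` with
(possibly `ω`-dependent) drift `drift` and diffusion `Sig`; `S t` is the Itô integral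
`∫_r^t Sig(t,s,·) dW_s`. -/
def SolvesSVIE {m d : ℕ} {Ω : Type*} [MeasurableSpace Ω] (μ : Measure Ω)
    (W : ℝ → Ω → Vec d) (r T : ℝ)
    (drift : ℝ → ℝ → Ω → Vec m) (Sig : ℝ → ℝ → Ω → Mat m d)
    (Y : ℝ → Ω → Vec m) (S : ℝ → Ω → Vec m) : Prop :=
  (∀ ω, Continuous fun u => Y u ω) ∧
  (∀ t ∈ Icc r T, ∀ᵐ ω ∂μ, MeasureTheory.IntegrableOn (fun s => drift t s ω) (Ioc r t)) ∧
  (∀ t ∈ Icc r T, IsItoIntegral μ W (fun s => Sig t s) r t (S t)) ∧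
  (∀ t ∈ Icc r T, ∀ᵐ ω ∂μ, Y t ω = Y r ω + (∫ s in Ioc r t, drift t s ω) + S t ω)

/-- σ-algebra generated by `ξ` stopped at `r` up to time `t` and the increments of `W`
after time `r` up to time `t` (generating the filtration used for strong solutions). -/
def naturalSigma {m d : ℕ} {Ω : Type*} [MeasurableSpace Ω]
    (ξ : ℝ → Ω → Vec m) (W : ℝ → Ω → Vec d) (r t : ℝ) : MeasurableSpace Ω :=
  (⨆ s ∈ Icc (0:ℝ) t, MeasurableSpace.comap (fun ω => ξ (min s r) ω) inferInstance) ⊔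
  (⨆ s ∈ Icc r (max r t), MeasurableSpace.comap (fun ω => W s ω - W r ω) inferInstance)

/-- `x` solves the deterministic Volterra integral equation
`x(t) = x(r) + ∫_r^t (b - ρ/2)(t,s,x) ds + ∫_r^t σ(t,s,x) dh(s)` on `[r,T]` with initial
condition `x^r = x̂^r`, where `h` has weak derivative `h'`. -/
def SolvesSupportVIE {m d : ℕ} (r T : ℝ)
    (b : ℝ → ℝ → (ℝ → Vec m) → Vec m)
    (σ : ℝ → ℝ → (ℝ → Vec m) → Mat m d)
    (σx : ℝ → ℝ → (ℝ → Vec m) → (Vec m →L[ℝ] Mat m d))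
    (xhat : ℝ → Vec m) (h' : ℝ → Vec d) (x : ℝ → Vec m) : Prop :=
  ContinuousOn x (Icc 0 T) ∧ (∀ u ∈ Icc 0 r, x u = xhat u) ∧
  (∀ t ∈ Icc r T, MeasureTheory.IntegrableOn
    (fun s => b t s x - (1/2 : ℝ) • corrTerm σ σx t s x + matVec (σ t s x) (h' s)) (Ioc r t)) ∧
  (∀ t ∈ Icc r T, x t = x r +
    ∫ s in Ioc r t, (b t s x - (1/2 : ℝ) • corrTerm σ σx t s x + matVec (σ t s x) (h' s)))

/-- The extension `ρ̄` of the correction term to the closed triangle `s ≤ t`. -/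
def corrTermBar {m d : ℕ} (σ : ℝ → ℝ → (ℝ → Vec m) → Mat m d)
    (σx : ℝ → ℝ → (ℝ → Vec m) → (Vec m →L[ℝ] Mat m d))
    (t s : ℝ) (x : ℝ → Vec m) : Vec m :=
  if s ≤ t then
    (EuclideanSpace.equiv (Fin m) ℝ).symm fun k =>
      ∑ l, (σx t s x ((EuclideanSpace.equiv (Fin m) ℝ).symm fun k' => σ s s x (k', l))) (k, l)
  else 0

/-- The weak derivative `∂_t ρ̄` of the extended correction term in its first variable,
built from `∂_t ∂_x σ`. -/
def corrTermBarT {m d : ℕ} (σ : ℝ → ℝ → (ℝ → Vec m) → Mat m d)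
    (σxt : ℝ → ℝ → (ℝ → Vec m) → (Vec m →L[ℝ] Mat m d))
    (t s : ℝ) (x : ℝ → Vec m) : Vec m :=
  if s ≤ t then
    (EuclideanSpace.equiv (Fin m) ℝ).symm fun k =>
      ∑ l, (σxt t s x ((EuclideanSpace.equiv (Fin m) ℝ).symm fun k' => σ s s x (k', l))) (k, l)
  else 0

end

/-! For fixed `ω`, Hölder's inequality in time with exponents `p̄` and `γ = p̄/(p̄-1)` bounds
`(∫_r^{t_j} X |Ẇ|)^p` by `(∫_r^{t_j} X^p̄)^{p/p̄} (∫_r^T |Ẇ|^γ)^{p/γ}`, uniformly in `j`. Hölder's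
inequality in `ω` with exponents `p̄/p` and `b = p̄/(p̄-p)` then separates the hypothesis on `X`
from the moment `E[(∫_r^T |Ẇ|^γ)^β]`, `β = pb/γ`, which by Jensen and Tonelli is at most
`(T-r)^β sup_u E|Ẇ_u|^α` with `α = γβ`. On a balanced partition `Ẇ_u` is a Brownian increment over
one partition interval divided by a comparable interval length, so `E|Ẇ_u|^α ≲ |𝕋ₙ|^{-α/2}`;
since `α/b = p` the powers of the mesh combine to `p(q/p̄ - 1/2)`. -/

open scoped NNReal

lemma EuclideanSpace.enorm_le_sum_enorm {ι : Type*} [Fintype ι] (y : EuclideanSpace ℝ ι) :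
    ‖y‖ₑ ≤ ∑ i, ‖y i‖ₑ := by
  have h : ‖y‖ ≤ ∑ i, ‖y i‖ := by
    rw [EuclideanSpace.norm_eq, Real.sqrt_le_iff]
    exact ⟨by positivity, Finset.sum_sq_le_sq_sum_of_nonneg fun i _ => norm_nonneg (y i)⟩
  simpa only [← ofReal_norm, ← ENNReal.ofReal_sum_of_nonneg fun i _ => norm_nonneg (y i)]
    using ENNReal.ofReal_le_ofReal h

lemma lintegral_enorm_rpow_gaussianReal (v : ℝ≥0) {α : ℝ} (hα : 0 ≤ α) :
    ∫⁻ x, ‖x‖ₑ ^ α ∂gaussianReal 0 v = (v : ℝ≥0∞) ^ (α / 2) * ∫⁻ x, ‖x‖ₑ ^ α ∂gaussianReal 0 1 := by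
  have hmap : (gaussianReal 0 1).map (√v * ·) = gaussianReal 0 v := by
    rw [gaussianReal_map_const_mul]
    congr 1
    · ring
    · ext; simp
  have hsqrt : ‖√(v : ℝ)‖ₑ ^ α = (v : ℝ≥0∞) ^ (α / 2) := by
    rw [Real.enorm_of_nonneg (Real.sqrt_nonneg _), Real.sqrt_eq_rpow,
      ENNReal.ofReal_rpow_of_nonneg (by positivity) hα, ← Real.rpow_mul v.coe_nonneg,
      ← ENNReal.ofReal_rpow_of_nonneg v.coe_nonneg (by positivity), ENNReal.ofReal_coe_nnreal]
    ring_nf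
  rw [← hmap, lintegral_map (by fun_prop) (by fun_prop)]
  simp only [enorm_mul, ENNReal.mul_rpow_of_nonneg _ _ hα]
  rw [lintegral_const_mul _ (by fun_prop), hsqrt]

lemma lintegral_enorm_rpow_gaussianReal_ne_top (μ : ℝ) (v : ℝ≥0) {α : ℝ} (hα : 0 < α) :
    ∫⁻ x, ‖x‖ₑ ^ α ∂gaussianReal μ v ≠ ⊤ := by
  have := (memLp_id_gaussianReal (μ := μ) (v := v) α.toNNReal).eLpNorm_lt_top
  rw [eLpNorm_lt_top_iff_lintegral_rpow_enorm_lt_top (by simpa using hα) (by simp)] at this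
  simpa [hα.le] using this.ne

section

variable {α Ω ι : Type*} [MeasurableSpace α] [MeasurableSpace Ω] {ν : Measure α} {μ : Measure Ω}

lemma iSup_setLIntegral_mul_rpow_le {S : Set α} {s : ι → Set α} (hsS : ∀ j, s j ⊆ S)
    {f : ι → α → ℝ≥0∞} {g : α → ℝ≥0∞} (hf : ∀ j, AEMeasurable (f j) ν) (hg : AEMeasurable g ν)
    {a b p : ℝ} (hab : a.HolderConjugate b) (hp : 0 ≤ p) :
    ⨆ j, (∫⁻ x in s j, f j x * g x ∂ν) ^ p
      ≤ (⨆ j, ∫⁻ x in s j, f j x ^ a ∂ν) ^ (p / a) * (∫⁻ x in S, g x ^ b ∂ν) ^ (p / b) := by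
  refine iSup_le fun j => ?_
  calc (∫⁻ x in s j, f j x * g x ∂ν) ^ p
      ≤ ((∫⁻ x in s j, f j x ^ a ∂ν) ^ (1 / a) * (∫⁻ x in s j, g x ^ b ∂ν) ^ (1 / b)) ^ p :=
        ENNReal.rpow_le_rpow
          (lintegral_mul_le_Lp_mul_Lq _ hab (hf j).restrict hg.restrict) hp
    _ ≤ ((⨆ j, ∫⁻ x in s j, f j x ^ a ∂ν) ^ (1 / a) * (∫⁻ x in S, g x ^ b ∂ν) ^ (1 / b)) ^ p := by
        have := hab.nonneg
        have := hab.symm.nonneg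
        gcongr
        · exact le_iSup (fun j => ∫⁻ x in s j, f j x ^ a ∂ν) j
        · exact hsS j
    _ = _ := by
        rw [ENNReal.mul_rpow_of_nonneg _ _ hp, ← ENNReal.rpow_mul, ← ENNReal.rpow_mul,
          one_div_mul_eq_div, one_div_mul_eq_div]

lemma rpow_lintegral_le_measure_univ_rpow_mul {h : α → ℝ≥0∞} (hh : AEMeasurable h ν) {β : ℝ}
    (hβ : 1 ≤ β) : (∫⁻ x, h x ∂ν) ^ β ≤ ν univ ^ (β - 1) * ∫⁻ x, h x ^ β ∂ν := by
  rcases hβ.eq_or_lt with rfl | hβ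
  · simp
  have hconj : β.HolderConjugate (β / (β - 1)) := .conjExponent hβ
  have := ENNReal.rpow_le_rpow (lintegral_mul_le_Lp_mul_Lq ν hconj hh (aemeasurable_const (b := 1)))
    (zero_le_one.trans hβ.le)
  simp only [Pi.mul_apply, mul_one, ENNReal.one_rpow, lintegral_one] at this
  rwa [ENNReal.mul_rpow_of_nonneg _ _ (by linarith), ← ENNReal.rpow_mul, ← ENNReal.rpow_mul,
    one_div_mul_cancel hconj.ne_zero, ENNReal.rpow_one, one_div_mul_eq_div,
    hconj.div_conj_eq_sub_one, mul_comm] at this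

lemma lintegral_rpow_setLIntegral_le [SFinite ν] [SFinite μ] {S : Set α} {h : α → Ω → ℝ≥0∞}
    (hh : Measurable (Function.uncurry h)) {β : ℝ} (hβ : 1 ≤ β) {B : ℝ≥0∞}
    (hB : ∀ x ∈ S, ∫⁻ ω, h x ω ^ β ∂μ ≤ B) :
    ∫⁻ ω, (∫⁻ x in S, h x ω ∂ν) ^ β ∂μ ≤ ν S ^ β * B := by
  have hhβ : Measurable fun z : α × Ω => h z.1 z.2 ^ β := hh.pow_const β
  calc ∫⁻ ω, (∫⁻ x in S, h x ω ∂ν) ^ β ∂μ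
      ≤ ∫⁻ ω, ν S ^ (β - 1) * ∫⁻ x in S, h x ω ^ β ∂ν ∂μ := by
        refine lintegral_mono fun ω => ?_
        have hhω : Measurable fun x => h x ω := hh.comp measurable_prodMk_right
        simpa only [Measure.restrict_apply_univ] using
          rpow_lintegral_le_measure_univ_rpow_mul (ν := ν.restrict S) hhω.aemeasurable hβ
    _ = ν S ^ (β - 1) * ∫⁻ x in S, ∫⁻ ω, h x ω ^ β ∂μ ∂ν := by
        rw [lintegral_const_mul _ hhβ.lintegral_prod_left',
          lintegral_lintegral_swap (f := fun ω x => h x ω ^ β)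
            (hhβ.comp measurable_swap).aemeasurable]
    _ ≤ ν S ^ (β - 1) * ∫⁻ _ in S, B ∂ν := by
        gcongr ν S ^ (β - 1) * ?_
        exact setLIntegral_mono measurable_const hB
    _ = ν S ^ β * B := by
        rw [setLIntegral_const, mul_comm B, ← mul_assoc]
        nth_rw 2 [← ENNReal.rpow_one (ν S)]
        rw [← ENNReal.rpow_add_of_nonneg _ _ (by linarith) zero_le_one, sub_add_cancel]

lemma Real.holderConjugate_div_div_sub {p q : ℝ} (hp : 0 < p) (hpq : p < q) :
    (q / p).HolderConjugate (q / (q - p)) := by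
  convert Real.HolderConjugate.conjExponent ((one_lt_div hp).2 hpq) using 1
  rw [Real.conjExponent]
  field_simp

lemma lintegral_iSup_setLIntegral_mul_rpow_le [SFinite ν] [SFinite μ] [Countable ι] {S : Set α}
    {s : ι → Set α} (hsS : ∀ j, s j ⊆ S) {f : ι → α → Ω → ℝ≥0∞} {g : α → Ω → ℝ≥0∞}
    (hf : ∀ j, Measurable (Function.uncurry (f j))) (hg : Measurable (Function.uncurry g))
    {p pbar : ℝ} (hp : 1 ≤ p) (hppbar : p < pbar) {B : ℝ≥0∞}
    (hB : ∀ x ∈ S, ∫⁻ ω, g x ω ^ (p * pbar / (pbar - p)) ∂μ ≤ B) :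
    ∫⁻ ω, ⨆ j, (∫⁻ x in s j, f j x ω * g x ω ∂ν) ^ p ∂μ
      ≤ (∫⁻ ω, ⨆ j, ∫⁻ x in s j, f j x ω ^ pbar ∂ν ∂μ) ^ (p / pbar)
        * (ν S ^ (p * (pbar - 1) / (pbar - p)) * B) ^ ((pbar - p) / pbar) := by
  have hp0 : 0 < p := by linarith
  have hpbar1 : 0 < pbar - 1 := by linarith
  have hpbarp : 0 < pbar - p := by linarith
  have hpbar0 : 0 < pbar := by linarith
  have hexp : 0 ≤ (pbar - p) / pbar := by positivity
  set γ := pbar / (pbar - 1) with hγdef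
  set β := p * (pbar - 1) / (pbar - p) with hβdef
  have hγ : pbar.HolderConjugate γ := .conjExponent (by linarith)
  have hβ : 1 ≤ β := by rw [le_div_iff₀ hpbarp]; nlinarith
  set F := fun ω => ⨆ j, ∫⁻ x in s j, f j x ω ^ pbar ∂ν
  set G := fun ω => ∫⁻ x in S, g x ω ^ γ ∂ν
  have hF : Measurable F := .iSup fun j => ((hf j).pow_const pbar).lintegral_prod_left'
  have hG : Measurable G := (hg.pow_const γ).lintegral_prod_left'
  calc ∫⁻ ω, ⨆ j, (∫⁻ x in s j, f j x ω * g x ω ∂ν) ^ p ∂μ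
      ≤ ∫⁻ ω, F ω ^ (p / pbar) * G ω ^ (p / γ) ∂μ := by
        refine lintegral_mono fun ω => iSup_setLIntegral_mul_rpow_le hsS
          (fun j => ((hf j).comp measurable_prodMk_right).aemeasurable)
          (hg.comp measurable_prodMk_right).aemeasurable hγ hp0.le
    _ ≤ (∫⁻ ω, F ω ∂μ) ^ (p / pbar) * (∫⁻ ω, G ω ^ β ∂μ) ^ ((pbar - p) / pbar) := by
        have hH := lintegral_mul_le_Lp_mul_Lq μ (Real.holderConjugate_div_div_sub hp0 hppbar)
          (hF.pow_const (p / pbar)).aemeasurable (hG.pow_const (p / γ)).aemeasurable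
        have hpb : p / pbar * (pbar / p) = 1 := by field_simp
        have hγb : p / γ * (pbar / (pbar - p)) = β := by rw [hγdef, hβdef]; field_simp
        simpa only [Pi.mul_apply, ← ENNReal.rpow_mul, hpb, hγb, ENNReal.rpow_one, one_div_div]
          using hH
    _ ≤ (∫⁻ ω, F ω ∂μ) ^ (p / pbar) * (ν S ^ β * B) ^ ((pbar - p) / pbar) := by
        have hγβ : γ * β = p * pbar / (pbar - p) := by rw [hγdef, hβdef]; field_simp
        gcongr
        refine lintegral_rpow_setLIntegral_le (hg.pow_const γ) hβ fun x hx => ?_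
        simpa only [← ENNReal.rpow_mul, hγβ] using hB x hx

end

namespace PartitionSeq

variable {r T : ℝ} (P : PartitionSeq r T) (n : ℕ)

lemma strictMonoOn_t : StrictMonoOn (P.t n) (Iic (P.k n)) :=
  strictMonoOn_Iic_of_lt_succ fun i hi => by simpa using P.mono n i hi

lemma t_mem_Icc {i : ℕ} (hi : i ≤ P.k n) : P.t n i ∈ Icc r T :=
  ⟨(P.left n).ge.trans ((P.strictMonoOn_t n).monotoneOn (Nat.zero_le _) hi (Nat.zero_le i)),
    ((P.strictMonoOn_t n).monotoneOn hi (mem_Iic.2 le_rfl) hi).trans (P.right n).le⟩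

lemma mesh_pos : 0 < P.mesh n :=
  (sub_pos.2 (P.mono n 0 (P.k_pos n))).trans_le
    (Finset.le_sup' (fun i => P.t n (i + 1) - P.t n i) (Finset.mem_range.2 (P.k_pos n)))

lemma sub_le_mesh {i : ℕ} (hi : i < P.k n) : P.t n (i + 1) - P.t n i ≤ P.mesh n :=
  Finset.le_sup' (fun i => P.t n (i + 1) - P.t n i) (Finset.mem_range.2 hi)

lemma Balanced.inv_sub_le {P : PartitionSeq r T} {cT : ℝ} (hbal : P.Balanced cT) {n i : ℕ}
    (hi : i < P.k n) :
    (P.t n (i + 1) - P.t n i)⁻¹ ≤ cT / P.mesh n := by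
  have hΔ : 0 < P.t n (i + 1) - P.t n i := sub_pos.2 (P.mono n i hi)
  rw [inv_eq_one_div, div_le_div_iff₀ hΔ (P.mesh_pos n), one_mul]
  exact hbal n i hi

lemma measurable_idxLt : Measurable (P.idxLt n) := by
  have hmono : Monotone (P.idxLt n) := fun _ _ huv =>
    Nat.findGreatest_mono (fun _ hi => hi.trans_le huv) le_rfl
  exact hmono.measurable

variable {E : Type*} [NormedAddCommGroup E] [NormedSpace ℝ E]

lemma interpDeriv_of_le {u : ℝ} (hu : u ≤ P.t n 1) (x : ℝ → E) : P.interpDeriv n x u = 0 :=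
  if_pos hu

lemma exists_interpDeriv_eq {u : ℝ} (h1 : P.t n 1 < u) (hu : u ≤ T) :
    ∃ i, 1 ≤ i ∧ i < P.k n ∧ ∀ x : ℝ → E,
      P.interpDeriv n x u = (P.t n (i + 1) - P.t n i)⁻¹ • (x (P.t n i) - x (P.t n (i - 1))) := by
  have hspec : P.t n (P.idxLt n u) < u := by
    unfold idxLt
    exact Nat.findGreatest_spec (P := fun i => P.t n i < u) (m := 1) (P.k_pos n) h1
  have hpos : 1 ≤ P.idxLt n u := by
    unfold idxLt
    exact Nat.le_findGreatest (m := 1) (P.k_pos n) h1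
  refine ⟨P.idxLt n u, hpos,
    (Nat.findGreatest_le _).lt_of_ne fun hk => ?_, fun x => if_neg h1.not_ge⟩
  have hk : P.idxLt n u = P.k n := hk
  rw [hk, P.right n] at hspec
  exact hspec.not_ge hu

lemma interpDeriv_congr {x y : ℝ → E} (h : ∀ i ≤ P.k n, x (P.t n i) = y (P.t n i)) :
    P.interpDeriv n x = P.interpDeriv n y := by
  funext u
  have hle : P.idxLt n u ≤ P.k n := Nat.findGreatest_le _
  simp only [interpDeriv, h _ hle, h _ ((Nat.sub_le _ 1).trans hle)]

lemma measurable_interpDeriv [MeasurableSpace E] [BorelSpace E] [SecondCountableTopology E]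
    {Ω : Type*} [MeasurableSpace Ω] {Y : ℝ → Ω → E} (hY : ∀ s, Measurable (Y s)) :
    Measurable fun z : ℝ × Ω => P.interpDeriv n (fun v => Y v z.2) z.1 := by
  have hstep : Measurable fun z : Ω × ℕ =>
      (P.t n (z.2 + 1) - P.t n z.2)⁻¹ • (Y (P.t n z.2) z.1 - Y (P.t n (z.2 - 1)) z.1) :=
    measurable_from_prod_countable_left fun i => by
      dsimp only
      exact ((hY _).sub (hY _)).const_smul _
  exact Measurable.ite (measurableSet_le measurable_fst measurable_const) measurable_const
    (hstep.comp (measurable_snd.prodMk ((P.measurable_idxLt n).comp measurable_fst)))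

end PartitionSeq

namespace IsBrownianMotion

variable {Ω : Type*} [MeasurableSpace Ω] {μ : Measure Ω} {d : ℕ} {W : ℝ → Ω → Vec d}

lemma aemeasurable_apply_sub (hW : IsBrownianMotion μ W) {s u : ℝ} (hs : 0 ≤ s) (hsu : s ≤ u)
    (l : Fin d) : AEMeasurable (fun ω => W u ω l - W s ω l) μ :=
  aemeasurable_of_map_neZero (by rw [hW.2.2.2 s u hs hsu l]; infer_instance)

lemma aemeasurable (hW : IsBrownianMotion μ W) {s : ℝ} (hs : 0 ≤ s) : AEMeasurable (W s) μ := by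
  have hcoord : ∀ l, AEMeasurable (fun ω => W s ω l) μ := fun l =>
    (hW.aemeasurable_apply_sub le_rfl hs l).congr (hW.2.1.mono fun ω h0 => by simp [h0])
  exact (WithLp.measurable_toLp 2 _).comp_aemeasurable (aemeasurable_pi_lambda _ hcoord)

lemma exists_measurable_modification (hW : IsBrownianMotion μ W) :
    ∃ Wm : ℝ → Ω → Vec d, (∀ s, Measurable (Wm s)) ∧ ∀ s, 0 ≤ s → W s =ᵐ[μ] Wm s := by
  classical
  refine ⟨fun s => if hs : 0 ≤ s then (hW.aemeasurable hs).mk else 0, fun s => ?_, fun s hs => ?_⟩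
  · dsimp only
    split_ifs with hs
    exacts [(hW.aemeasurable hs).measurable_mk, measurable_const]
  · simpa only [dif_pos hs] using (hW.aemeasurable hs).ae_eq_mk

lemma lintegral_enorm_sub_rpow_le (hW : IsBrownianMotion μ W) {α : ℝ} (hα : 1 ≤ α) {s u : ℝ}
    (hs : 0 ≤ s) (hsu : s ≤ u) :
    ∫⁻ ω, ‖W u ω - W s ω‖ₑ ^ α ∂μ
      ≤ (d : ℝ≥0∞) ^ α * (∫⁻ x, ‖x‖ₑ ^ α ∂gaussianReal 0 1) * ENNReal.ofReal (u - s) ^ (α / 2) := by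
  have hα0 : 0 ≤ α := by linarith
  have hcoord : ∀ l : Fin d, ∫⁻ ω, ‖W u ω l - W s ω l‖ₑ ^ α ∂μ
      = ENNReal.ofReal (u - s) ^ (α / 2) * ∫⁻ x, ‖x‖ₑ ^ α ∂gaussianReal 0 1 := fun l => by
    rw [← lintegral_map' (measurable_enorm.pow_const α).aemeasurable
      (hW.aemeasurable_apply_sub hs hsu l), hW.2.2.2 s u hs hsu l,
      lintegral_enorm_rpow_gaussianReal _ hα0]
    rfl
  calc ∫⁻ ω, ‖W u ω - W s ω‖ₑ ^ α ∂μ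
      ≤ ∫⁻ ω, (d : ℝ≥0∞) ^ (α - 1) * ∑ l, ‖W u ω l - W s ω l‖ₑ ^ α ∂μ := by
        refine lintegral_mono fun ω => ?_
        calc ‖W u ω - W s ω‖ₑ ^ α ≤ (∑ l, ‖W u ω l - W s ω l‖ₑ) ^ α := by
              exact ENNReal.rpow_le_rpow (EuclideanSpace.enorm_le_sum_enorm _) hα0
          _ ≤ _ := by
              simpa only [Finset.card_univ, Fintype.card_fin] using
                ENNReal.rpow_sum_le_const_mul_sum_rpow (Finset.univ : Finset (Fin d)) _ hα
    _ = (d : ℝ≥0∞) ^ (α - 1) * (d * (ENNReal.ofReal (u - s) ^ (α / 2)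
          * ∫⁻ x, ‖x‖ₑ ^ α ∂gaussianReal 0 1)) := by
        rw [lintegral_const_mul' _ _ (by simp [hα]), lintegral_finsetSum' _ fun l _ =>
          (hW.aemeasurable_apply_sub hs hsu l).enorm.pow_const α]
        simp [hcoord]
    _ = _ := by
        have hd : (d : ℝ≥0∞) ^ (α - 1) * d = d ^ α := by
          rcases eq_or_ne d 0 with rfl | hd
          · simp [ENNReal.zero_rpow_of_pos (by linarith : 0 < α)]
          · conv_rhs => rw [← sub_add_cancel α 1,
              ENNReal.rpow_add _ _ (by simpa using hd) (by simp), ENNReal.rpow_one]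
        rw [← hd]
        ring

lemma lintegral_enorm_interpDeriv_rpow_le (hW : IsBrownianMotion μ W) {r T : ℝ} (hr : 0 ≤ r)
    {P : PartitionSeq r T} {cT : ℝ} (hbal : P.Balanced cT) {α : ℝ} (hα : 1 ≤ α) (n : ℕ) {u : ℝ}
    (hu : u ≤ T) :
    ∫⁻ ω, ‖P.interpDeriv n (fun v => W v ω) u‖ₑ ^ α ∂μ
      ≤ ENNReal.ofReal cT ^ α * ((d : ℝ≥0∞) ^ α * ∫⁻ x, ‖x‖ₑ ^ α ∂gaussianReal 0 1)
        * ENNReal.ofReal (P.mesh n) ^ (-(α / 2)) := by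
  have hα0 : 0 < α := by linarith
  rcases le_or_gt u (P.t n 1) with h1 | h1
  · simp [P.interpDeriv_of_le n h1, ENNReal.zero_rpow_of_pos hα0]
  obtain ⟨i, hi1, hik, hD⟩ := P.exists_interpDeriv_eq (E := Vec d) n h1 hu
  have hmesh := P.mesh_pos n
  have hΔ : 0 < P.t n (i + 1) - P.t n i := sub_pos.2 (P.mono n i hik)
  have hprev : P.t n (i - 1 + 1) = P.t n i := by rw [Nat.sub_add_cancel hi1]
  have hprev_le : P.t n i - P.t n (i - 1) ≤ P.mesh n := by
    simpa only [hprev] using P.sub_le_mesh n (i := i - 1) (by omega)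
  have hW_mom := hW.lintegral_enorm_sub_rpow_le hα (hr.trans (P.t_mem_Icc n (i := i - 1)
    (by omega)).1) (by simpa only [hprev] using (P.mono n (i - 1) (by omega)).le)
  simp_rw [hD, enorm_smul, ENNReal.mul_rpow_of_nonneg _ _ hα0.le]
  rw [lintegral_const_mul' _ _ (by simp [hα0.le])]
  set M := ENNReal.ofReal (P.mesh n)
  have hM0 : M ≠ 0 := by simpa [M] using hmesh
  calc ‖(P.t n (i + 1) - P.t n i)⁻¹‖ₑ ^ α * ∫⁻ ω, ‖W (P.t n i) ω - W (P.t n (i - 1)) ω‖ₑ ^ α ∂μ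
      ≤ ENNReal.ofReal (cT / P.mesh n) ^ α
          * ((d : ℝ≥0∞) ^ α * (∫⁻ x, ‖x‖ₑ ^ α ∂gaussianReal 0 1) * M ^ (α / 2)) := by
        rw [Real.enorm_of_nonneg (inv_nonneg.2 hΔ.le)]
        gcongr
        · exact hbal.inv_sub_le hik
        · exact hW_mom.trans (by gcongr; exact ENNReal.ofReal_le_ofReal hprev_le)
    _ = _ := by
        rw [ENNReal.ofReal_div_of_pos hmesh, ENNReal.div_rpow_of_nonneg _ _ hα0.le, div_eq_mul_inv,
          ← ENNReal.rpow_neg]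
        have hsplit : M ^ (-(α / 2)) = M ^ (-α) * M ^ (α / 2) := by
          rw [← ENNReal.rpow_add _ _ hM0 ENNReal.ofReal_ne_top]
          ring_nf
        rw [hsplit]
        ring

-- `IsBrownianMotion` makes each `W s` measurable only up to null sets, through its law.
lemma exists_measurable_interpDeriv_ae_eq (hW : IsBrownianMotion μ W) {r T : ℝ} (hr : 0 ≤ r)
    (P : PartitionSeq r T) (n : ℕ) :
    ∃ D : ℝ → Ω → Vec d, Measurable (Function.uncurry D) ∧
      ∀ᵐ ω ∂μ, ∀ u, P.interpDeriv n (fun v => W v ω) u = D u ω := by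
  obtain ⟨Wm, hWm_meas, hWm⟩ := hW.exists_measurable_modification
  refine ⟨fun u ω => P.interpDeriv n (fun v => Wm v ω) u, P.measurable_interpDeriv n hWm_meas, ?_⟩
  filter_upwards [ae_all_iff.2 fun i : Fin (P.k n + 1) =>
    hWm (P.t n i) (hr.trans (P.t_mem_Icc n (Nat.lt_succ_iff.1 i.2)).1)] with ω hω u
  exact congrFun (P.interpDeriv_congr n (y := fun v => Wm v ω)
    fun i hi => hω ⟨i, Nat.lt_succ_of_le hi⟩) u

lemma exists_lintegral_iSup_setLIntegral_mul_enorm_interpDeriv_rpow_le [SFinite μ]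
    (hW : IsBrownianMotion μ W) {r T : ℝ} (hr : 0 ≤ r) {P : PartitionSeq r T} {cT : ℝ}
    (hbal : P.Balanced cT) {p pbar : ℝ} (hp : 1 ≤ p) (hppbar : p < pbar) :
    ∃ K ≠ ⊤, ∀ X : ℝ → ℝ → Ω → ℝ, Measurable (fun z : ℝ × ℝ × Ω => X z.1 z.2.1 z.2.2) → ∀ n,
      ∫⁻ ω, ⨆ j : Fin (P.k n + 1), (∫⁻ s in Ioc r (P.t n j),
          ENNReal.ofReal (X (P.t n j) s ω) * ‖P.interpDeriv n (fun v => W v ω) s‖ₑ) ^ p ∂μ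
        ≤ (∫⁻ ω, (⨆ j : Fin (P.k n + 1),
            ∫⁻ s in Ioc r (P.t n j), ENNReal.ofReal (X (P.t n j) s ω) ^ pbar) ∂μ) ^ (p / pbar)
          * K * ENNReal.ofReal (P.mesh n) ^ (-(p / 2)) := by
  set α := p * pbar / (pbar - p) with hα
  have hα1 : 1 ≤ α := by
    rw [hα, le_div_iff₀ (by linarith)]
    nlinarith
  have hexp : 0 ≤ (pbar - p) / pbar := div_nonneg (by linarith) (by linarith)
  set C := ENNReal.ofReal cT ^ α * ((d : ℝ≥0∞) ^ α * ∫⁻ x, ‖x‖ₑ ^ α ∂gaussianReal 0 1)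
  have hC : C ≠ ⊤ := by
    have := lintegral_enorm_rpow_gaussianReal_ne_top 0 1 (zero_lt_one.trans_le hα1)
    have := zero_le_one.trans hα1
    finiteness
  have hβ : 0 ≤ p * (pbar - 1) / (pbar - p) := div_nonneg (by nlinarith) (by linarith)
  refine ⟨(ENNReal.ofReal (T - r) ^ (p * (pbar - 1) / (pbar - p)) * C) ^ ((pbar - p) / pbar),
    ENNReal.rpow_ne_top_of_nonneg hexp (by finiteness), fun X hX n => ?_⟩
  obtain ⟨D, hD_meas, hD⟩ := hW.exists_measurable_interpDeriv_ae_eq hr P n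
  have hmom : ∀ u ∈ Ioc r T, ∫⁻ ω, ‖D u ω‖ₑ ^ α ∂μ ≤ C * ENNReal.ofReal (P.mesh n) ^ (-(α / 2)) :=
    fun u hu => by
      have hu_ae : (fun ω => ‖P.interpDeriv n (fun v => W v ω) u‖ₑ ^ α)
          =ᵐ[μ] fun ω => ‖D u ω‖ₑ ^ α := hD.mono fun ω h => by simp only [h u]
      rw [← lintegral_congr_ae hu_ae]
      exact hW.lintegral_enorm_interpDeriv_rpow_le hr hbal hα1 n hu.2
  have hαp : -(α / 2) * ((pbar - p) / pbar) = -(p / 2) := by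
    have : pbar - p ≠ 0 := by linarith
    have : pbar ≠ 0 := by linarith
    rw [hα]
    field_simp
  calc _ = ∫⁻ ω, ⨆ j : Fin (P.k n + 1), (∫⁻ s in Ioc r (P.t n j),
        ENNReal.ofReal (X (P.t n j) s ω) * ‖D s ω‖ₑ) ^ p ∂μ :=
        lintegral_congr_ae (hD.mono fun ω h => by simp only [h])
    _ ≤ _ := lintegral_iSup_setLIntegral_mul_rpow_le
        (fun j => Ioc_subset_Ioc_right (P.t_mem_Icc n (Nat.lt_succ_iff.1 j.2)).2)
        (fun j => (hX.comp (measurable_const.prodMk measurable_id)).ennreal_ofReal)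
        hD_meas.enorm hp hppbar hmom
    _ = _ := by
        rw [Real.volume_Ioc, ← mul_assoc _ C, ENNReal.mul_rpow_of_nonneg _ _ hexp,
          ← ENNReal.rpow_mul, hαp, mul_assoc]

end IsBrownianMotion

theorem volterra_integral_against_interpolated_bm_general {d : ℕ} {Ω : Type*} [MeasurableSpace Ω]
    (μ : Measure Ω) [IsProbabilityMeasure μ] (r T : ℝ) (hr : 0 ≤ r)
    (P : PartitionSeq r T) (cT : ℝ) (hbal : P.Balanced cT)
    (W : ℝ → Ω → Vec d) (hW : IsBrownianMotion μ W)
    (X : ℕ → ℝ → ℝ → Ω → ℝ)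
    (hXmeas : ∀ n, Measurable fun z : ℝ × ℝ × Ω => X n z.1 z.2.1 z.2.2)
    (p pbar c q : ℝ) (hp : 1 < p) (hpbar : p < pbar)
    (hbound : ∀ n, ∫⁻ ω, (⨆ j : Fin (P.k n + 1),
        ∫⁻ s in Ioc r (P.t n j), ENNReal.ofReal (X n (P.t n j) s ω) ^ pbar) ∂μ
      ≤ ENNReal.ofReal c * ENNReal.ofReal (P.mesh n) ^ q) :
    ∃ cp > (0:ℝ), ∀ n, ∫⁻ ω, (⨆ j : Fin (P.k n + 1),
        (∫⁻ s in Ioc r (P.t n j), ENNReal.ofReal (X n (P.t n j) s ω)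
          * (‖P.interpDeriv n (fun v => W v ω) s‖₊ : ℝ≥0∞)) ^ p) ∂μ
      ≤ ENNReal.ofReal cp * ENNReal.ofReal (P.mesh n) ^ (p * (q / pbar - 1/2)) := by
  obtain ⟨K, hK, hvolterra⟩ :=
    hW.exists_lintegral_iSup_setLIntegral_mul_enorm_interpDeriv_rpow_le hr hbal hp.le hpbar
  have hppbar : 0 ≤ p / pbar := div_nonneg (by linarith) (by linarith)
  set K' := ENNReal.ofReal c ^ (p / pbar) * K
  have hK' : K' ≠ ⊤ := by finiteness
  refine ⟨K'.toReal + 1, by positivity, fun n => ?_⟩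
  set M := ENNReal.ofReal (P.mesh n)
  have hM : M ≠ 0 := by simpa [M] using P.mesh_pos n
  have hexp : q * (p / pbar) + -(p / 2) = p * (q / pbar - 1 / 2) := by ring
  calc _ ≤ _ := hvolterra (X n) (hXmeas n) n
    _ ≤ (ENNReal.ofReal c * M ^ q) ^ (p / pbar) * K * M ^ (-(p / 2)) := by
        gcongr
        exact hbound n
    _ = K' * M ^ (p * (q / pbar - 1 / 2)) := by
        rw [ENNReal.mul_rpow_of_nonneg _ _ hppbar, ← ENNReal.rpow_mul, ← hexp, ENNReal.rpow_add _ _ hM ENNReal.ofReal_ne_top]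
        ring
    _ ≤ _ := by
        gcongr
        rw [← ENNReal.ofReal_toReal hK']
        exact ENNReal.ofReal_le_ofReal (by simp)

/-- moment estimate for Volterra integrals of nonnegative random fields against
the modulus of the derivative of the interpolated Brownian motion. -/
theorem volterra_integral_against_interpolated_bm {d : ℕ} {Ω : Type*} [MeasurableSpace Ω]
    (μ : Measure Ω) [IsProbabilityMeasure μ] (r T : ℝ) (hr : 0 ≤ r) (hrT : r < T)
    (P : PartitionSeq r T) (cT : ℝ) (hcT : 1 ≤ cT) (hbal : P.Balanced cT)
    (W : ℝ → Ω → Vec d) (hW : IsBrownianMotion μ W)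
    (X : ℕ → ℝ → ℝ → Ω → ℝ) (hXpos : ∀ n t' s ω, 0 ≤ X n t' s ω)
    (hXmeas : ∀ n, Measurable fun z : ℝ × ℝ × Ω => X n z.1 z.2.1 z.2.2)
    (p pbar c q : ℝ) (hp : 1 < p) (hpbar : p < pbar) (hc : 0 < c) (hq : pbar / 2 ≤ q)
    (hbound : ∀ n, ∫⁻ ω, (⨆ j : Fin (P.k n + 1),
        ∫⁻ s in Ioc r (P.t n j), ENNReal.ofReal (X n (P.t n j) s ω) ^ pbar) ∂μ
      ≤ ENNReal.ofReal c * ENNReal.ofReal (P.mesh n) ^ q) :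
    ∃ cp > (0:ℝ), ∀ n, ∫⁻ ω, (⨆ j : Fin (P.k n + 1),
        (∫⁻ s in Ioc r (P.t n j), ENNReal.ofReal (X n (P.t n j) s ω)
          * (‖P.interpDeriv n (fun v => W v ω) s‖₊ : ℝ≥0∞)) ^ p) ∂μ
      ≤ ENNReal.ofReal cp * ENNReal.ofReal (P.mesh n) ^ (p * (q / pbar - 1/2)) :=
  volterra_integral_against_interpolated_bm_general μ r T hr P cT hbal W hW X hXmeas p pbar c q hp
    hpbar hbound
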